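/- Let X, Y be normed linear spaces and x₁ ≠ x₂ in X. Let Φ_{x_i} : ℓ_∞(X,Y) → Lip^{x_i}(X,Y) be the isometries Φ_{x_i}(g)(x) = ‖x−x_i‖·g(x) + g(x_i). If f ∈ Lip^{x₁}(X,Y) ∩ Lip^{x₂}(X,Y) satisfies Φ_{x₂}(Φ_{x₁}^{-1}(f)) = f, then f(x) = 0 for all x ∈ X with ‖x − x₁‖ ≠ ‖x − x₂‖; in particular f(x₁) = 0 = f(x₂). -/

import Mathlib

section

variable {X Y : Type*} [NormedAddCommGroup X] [NormedSpace ℝ X]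
  [NormedAddCommGroup Y] [NormedSpace ℝ Y]

/-- `f` is Lipschitz at `x`. -/
def LipAt (x : X) (f : X → Y) : Prop :=
  ∃ k > (0 : ℝ), ∀ x' : X, ‖f x' - f x‖ ≤ k * ‖x' - x‖

/-- `f` is a bounded function. -/
def IsBddFun (f : X → Y) : Prop := ∃ C : ℝ, ∀ x' : X, ‖f x'‖ ≤ C

/-- The map `Φ_x : ℓ_∞(X,Y) → Lip^x(X,Y)`. -/
noncomputable def PhiMap (x : X) (g : X → Y) : X → Y :=
  fun x' => ‖x' - x‖ • g x' + g x

end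

/-! If `Φ_{x₁} g = Φ_{x₂} g`, subtracting the two expressions gives
`(‖x - x₁‖ - ‖x - x₂‖) • g x = g x₂ - g x₁` for every `x`. At the midpoint of `x₁` and `x₂` the
coefficient vanishes, so `g x₁ = g x₂`; evaluating at `x₁` then gives `‖x₁ - x₂‖ • g x₁ = 0`, so
`g` vanishes at `x₁`, hence wherever the coefficient is nonzero, and so does `f = Φ_{x₁} g`. -/

section

variable {X Y : Type*} [NormedAddCommGroup X] [NormedAddCommGroup Y] [NormedSpace ℝ Y]
  {x₁ x₂ : X} {g : X → Y}

theorem sub_smul_eq_of_PhiMap_eq (h : PhiMap x₁ g = PhiMap x₂ g) (x : X) :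
    (‖x - x₁‖ - ‖x - x₂‖) • g x = g x₂ - g x₁ := by
  have hx := congrFun h x
  simp only [PhiMap] at hx
  rw [sub_smul]
  linear_combination (norm := module) hx

variable [NormedSpace ℝ X]

theorem apply_eq_apply_of_PhiMap_eq (h : PhiMap x₁ g = PhiMap x₂ g) : g x₁ = g x₂ := by
  have hmid : ‖midpoint ℝ x₁ x₂ - x₁‖ = ‖midpoint ℝ x₁ x₂ - x₂‖ := by
    rw [← dist_eq_norm, ← dist_eq_norm, dist_midpoint_left, dist_midpoint_right]
  have := sub_smul_eq_of_PhiMap_eq h (midpoint ℝ x₁ x₂)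
  rw [hmid, sub_self, zero_smul] at this
  exact (sub_eq_zero.mp this.symm).symm

theorem apply_left_eq_zero_of_PhiMap_eq (hx : x₁ ≠ x₂) (h : PhiMap x₁ g = PhiMap x₂ g) :
    g x₁ = 0 := by
  have := sub_smul_eq_of_PhiMap_eq h x₁
  rw [sub_self, norm_zero, zero_sub, ← apply_eq_apply_of_PhiMap_eq h, sub_self, neg_smul,
    neg_eq_zero] at this
  exact (smul_eq_zero.mp this).resolve_left (norm_ne_zero_iff.mpr (sub_ne_zero.mpr hx))

theorem apply_eq_zero_of_PhiMap_eq (h : PhiMap x₁ g = PhiMap x₂ g) {x : X}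
    (hne : ‖x - x₁‖ ≠ ‖x - x₂‖) : g x = 0 := by
  have := sub_smul_eq_of_PhiMap_eq h x
  rw [← apply_eq_apply_of_PhiMap_eq h, sub_self] at this
  exact (smul_eq_zero.mp this).resolve_left (sub_ne_zero.mpr hne)

theorem PhiMap_apply_eq_zero_of_PhiMap_eq (hx : x₁ ≠ x₂) (h : PhiMap x₁ g = PhiMap x₂ g)
    {x : X} (hne : ‖x - x₁‖ ≠ ‖x - x₂‖) : PhiMap x₁ g x = 0 := by
  simp [PhiMap, apply_eq_zero_of_PhiMap_eq h hne, apply_left_eq_zero_of_PhiMap_eq hx h]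

end

theorem fixed_point_of_Phi_composition_general {X Y : Type*} [NormedAddCommGroup X]
    [NormedSpace ℝ X] [NormedAddCommGroup Y] [NormedSpace ℝ Y]
    (x₁ x₂ : X) (hx : x₁ ≠ x₂) (f : X → Y)
    (g : X → Y) (hg₁ : PhiMap x₁ g = f) (hg₂ : PhiMap x₂ g = f) :
    (∀ x : X, ‖x - x₁‖ ≠ ‖x - x₂‖ → f x = 0) ∧ f x₁ = 0 ∧ f x₂ = 0 := by
  subst hg₁
  have hvanish : ∀ x : X, ‖x - x₁‖ ≠ ‖x - x₂‖ → PhiMap x₁ g x = 0 :=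
    fun x => PhiMap_apply_eq_zero_of_PhiMap_eq hx hg₂.symm
  have hdist : ‖x₁ - x₂‖ ≠ 0 := norm_ne_zero_iff.mpr (sub_ne_zero.mpr hx)
  refine ⟨hvanish, hvanish x₁ ?_, hvanish x₂ ?_⟩
  · simpa [eq_comm] using hdist
  · simpa [norm_sub_rev x₂ x₁] using hdist

/-- If `f ∈ Lip^{x₁}(X,Y) ∩ Lip^{x₂}(X,Y)` is a fixed point of `Φ_{x₂} ∘ Φ_{x₁}⁻¹`
(i.e. the `ℓ_∞` preimage `g` of `f` under `Φ_{x₁}` satisfies `Φ_{x₂}(g) = f`),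
then `f` vanishes at every point `x` with `‖x - x₁‖ ≠ ‖x - x₂‖`; in particular
`f x₁ = 0 = f x₂`. -/
theorem fixed_point_of_Phi_composition {X Y : Type*} [NormedAddCommGroup X]
    [NormedSpace ℝ X] [NormedAddCommGroup Y] [NormedSpace ℝ Y]
    (x₁ x₂ : X) (hx : x₁ ≠ x₂) (f : X → Y)
    (hf₁ : LipAt x₁ f) (hf₂ : LipAt x₂ f)
    (g : X → Y) (hg : IsBddFun g) (hg₁ : PhiMap x₁ g = f) (hg₂ : PhiMap x₂ g = f) :
    (∀ x : X, ‖x - x₁‖ ≠ ‖x - x₂‖ → f x = 0) ∧ f x₁ = 0 ∧ f x₂ = 0 :=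
  fixed_point_of_Phi_composition_general x₁ x₂ hx f g hg₁ hg₂
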